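/- arXiv:1801.06650 — 12 statements merged into one kernel-verified Lean document; each statement's English description precedes it below -/
import Mathlib

section
/- In an involutive commutative residuated lattice A with element a, the following are equivalent: (i) e ≤ a and a² = a; (ii) a·¬a = ¬a; (iii) a = a → a. -/
/-- An involutive commutative residuated lattice (IRL): a commutative monoid with a
lattice order and an involution `neg` satisfying `x * y ≤ z ↔ neg z * y ≤ neg x`. -/
class IRL (α : Type*) extends Lattice α, CommMonoid α where
  neg : α → α
  neg_neg : ∀ x : α, neg (neg x) = x
  res : ∀ x y z : α, x * y ≤ z ↔ neg z * y ≤ neg x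

namespace IRL

variable {α : Type*} [IRL α]

/-- Residuation operation `x → y := ¬(x · ¬y)`. -/
def arr (x y : α) : α := neg (x * neg y)

lemma le_iff_neg_le (x y : α) : x ≤ y ↔ neg y ≤ neg x := by
  have := res x 1 y; simpa using this

lemma neg_inj {x y : α} (h : neg x = neg y) : x = y := by
  have := congrArg neg h; simpa [neg_neg] using this

lemma adj (x y z : α) : x * y ≤ z ↔ x ≤ neg (y * neg z) := by
  rw [res, le_iff_neg_le x, neg_neg, mul_comm]

lemma mul_mono {x y : α} (z : α) (h : x ≤ y) : x * z ≤ y * z := by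
  have h1 : y ≤ neg (z * neg (y * z)) := (adj y z (y * z)).mp le_rfl
  exact (adj x z (y * z)).mpr (le_trans h h1)

end IRL

open IRL in
theorem stmt2 {α : Type*} [IRL α] (a : α) :
    ((1 ≤ a ∧ a * a = a) ↔ a * neg a = neg a) ∧
    (a * neg a = neg a ↔ a = arr a a) := by
  constructor
  · constructor
    · rintro ⟨h1, h2⟩
      have hle : a * neg a ≤ neg a := by
        rw [mul_comm]
        exact (res a a a).mp h2.le
      have hge : neg a ≤ a * neg a := by
        calc neg a = 1 * neg a := (one_mul _).symm
        _ ≤ a * neg a := mul_mono _ h1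
      exact le_antisymm hle hge
    · intro h
      have h1 : (1 : α) ≤ a := by
        have : (1 : α) * a ≤ a := by simp
        have := (adj 1 a a).mp this
        simpa [h, IRL.neg_neg] using this
      refine ⟨h1, le_antisymm ?_ ?_⟩
      · exact (res a a a).mpr (by rw [mul_comm, h])
      · calc a = 1 * a := (one_mul _).symm
          _ ≤ a * a := mul_mono _ h1
  · constructor
    · intro h; unfold arr; rw [h, IRL.neg_neg]
    · intro h
      have := congrArg neg h
      unfold arr at this
      rw [IRL.neg_neg] at this
      exact this.symm
end

section
/- Every square-increasing IRL generated by a finite set {a₁,...,aₙ} is bounded: setting c = e ∨ f ∨ ⋁_{i≤n}(aᵢ ∨ ¬aᵢ) and b = c², we have ¬b ≤ a ≤ b for all elements a of the algebra. -/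
namespace IRL

variable {α : Type*} [IRL α]

theorem neg_anti {x y : α} (h : x ≤ y) : neg y ≤ neg x := by
  have h1 : x * 1 ≤ y := by simpa using h
  have h2 := (res x 1 y).mp h1
  simpa using h2

theorem mul_le_r {a b : α} (h : a ≤ b) (x : α) : a * x ≤ b * x := by
  have h1 : neg (b * x) * x ≤ neg b := (res b x (b * x)).mp le_rfl
  exact (res a x (b * x)).mpr (h1.trans (neg_anti h))

theorem mul_le_l (x : α) {a b : α} (h : a ≤ b) : x * a ≤ x * b := by
  rw [mul_comm x a, mul_comm x b]; exact mul_le_r h x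

theorem mul_le_mul' {a b x y : α} (h : a ≤ b) (h' : x ≤ y) : a * x ≤ b * y :=
  (mul_le_r h x).trans (mul_le_l b h')

end IRL

open IRL in
/-- Every square-increasing IRL generated by a finite set `{a₁, …, aₙ}` (given as a
list `l`) is bounded by `b := c²` and `¬b`, where
`c = e ⊔ f ⊔ ⨆ i (aᵢ ⊔ ¬aᵢ)`. Generation: every subuniverse containing the
generators is the whole algebra. -/
theorem stmt4 {α : Type*} [IRL α] (sq : ∀ x : α, x ≤ x * x)
    (l : List α)
    (hgen : ∀ S : Set α, (1 : α) ∈ S →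
      (∀ x ∈ S, ∀ y ∈ S, x * y ∈ S) →
      (∀ x ∈ S, ∀ y ∈ S, x ⊓ y ∈ S) →
      (∀ x ∈ S, ∀ y ∈ S, x ⊔ y ∈ S) →
      (∀ x ∈ S, neg x ∈ S) →
      (∀ x ∈ l, x ∈ S) → ∀ a : α, a ∈ S)
    (c b : α)
    (hc : c = l.foldr (fun x y => (x ⊔ neg x) ⊔ y) ((1 : α) ⊔ neg 1))
    (hb : b = c * c) :
    ∀ a : α, neg b ≤ a ∧ a ≤ b := by
  -- bounds on the fold
  have hfold : ∀ L : List α,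
      ((1 : α) ⊔ neg 1 ≤ L.foldr (fun x y => (x ⊔ neg x) ⊔ y) ((1 : α) ⊔ neg 1)) ∧
      (∀ x ∈ L, x ⊔ neg x ≤ L.foldr (fun x y => (x ⊔ neg x) ⊔ y) ((1 : α) ⊔ neg 1)) := by
    intro L
    induction L with
    | nil => exact ⟨le_rfl, by simp⟩
    | cons a L ih =>
      refine ⟨ih.1.trans ?_, ?_⟩
      · simp [List.foldr_cons]
      · intro x hx
        rcases List.mem_cons.mp hx with rfl | hx
        · simp [List.foldr_cons]
        · exact (ih.2 x hx).trans (by simp [List.foldr_cons])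
  have h1c : (1 : α) ≤ c := by
    rw [hc]; exact le_sup_left.trans (hfold l).1
  have hfc : neg (1 : α) ≤ c := by
    rw [hc]; exact le_sup_right.trans (hfold l).1
  have hxc : ∀ x ∈ l, x ≤ c ∧ neg x ≤ c := by
    intro x hx
    constructor
    · rw [hc]; exact le_sup_left.trans ((hfold l).2 x hx)
    · rw [hc]; exact le_sup_right.trans ((hfold l).2 x hx)
  have hcb : c ≤ b := hb ▸ sq c
  have hnegc1 : neg c ≤ 1 := by
    have h := neg_anti hfc
    rwa [IRL.neg_neg] at h
  have hnb_nc : neg b ≤ neg c := neg_anti hcb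
  have hnb1 : neg b ≤ 1 := hnb_nc.trans hnegc1
  -- key: neg b * c ≤ neg c
  have hdc : neg b * c ≤ neg c := (res c c b).mp hb.ge
  -- key: c * b ≤ b  (i.e. c³ ≤ c²)
  have hcbb : c * b ≤ b := by
    refine (res c b b).mpr ?_
    calc neg b * b = neg b * (c * c) := by rw [hb]
      _ ≤ (neg b * neg b) * (c * c) := mul_le_r (sq (neg b)) _
      _ = (neg b * c) * (neg b * c) := mul_mul_mul_comm _ _ _ _
      _ ≤ neg c * neg c := mul_le_mul' hdc hdc
      _ ≤ 1 * neg c := mul_le_r hnegc1 _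
      _ = neg c := one_mul _
  have hbb : b * b ≤ b := by
    calc b * b = c * (c * b) := by rw [hb, mul_assoc]
      _ ≤ c * b := mul_le_l c hcbb
      _ ≤ b := hcbb
  -- the subuniverse
  set S : Set α := {x | neg b ≤ x ∧ x ≤ b} with hS
  have hmem : ∀ x : α, x ∈ S ↔ neg b ≤ x ∧ x ≤ b := fun x => Iff.rfl
  have h1S : (1 : α) ∈ S := ⟨hnb1, h1c.trans hcb⟩
  have hmulS : ∀ x ∈ S, ∀ y ∈ S, x * y ∈ S := by
    intro x hx y hy
    refine ⟨?_, ?_⟩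
    · exact (sq (neg b)).trans (mul_le_mul' hx.1 hy.1)
    · exact (mul_le_mul' hx.2 hy.2).trans hbb
  have hinfS : ∀ x ∈ S, ∀ y ∈ S, x ⊓ y ∈ S := by
    intro x hx y hy
    exact ⟨le_inf hx.1 hy.1, inf_le_left.trans hx.2⟩
  have hsupS : ∀ x ∈ S, ∀ y ∈ S, x ⊔ y ∈ S := by
    intro x hx y hy
    exact ⟨hx.1.trans le_sup_left, sup_le hx.2 hy.2⟩
  have hnegS : ∀ x ∈ S, neg x ∈ S := by
    intro x hx
    refine ⟨neg_anti hx.2, ?_⟩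
    have h := neg_anti hx.1
    rwa [IRL.neg_neg] at h
  have hgensS : ∀ x ∈ l, x ∈ S := by
    intro x hx
    refine ⟨?_, (hxc x hx).1.trans hcb⟩
    have h := neg_anti ((hxc x hx).2.trans hcb)
    rwa [IRL.neg_neg] at h
  intro a
  exact hgen S h1S hmulS hinfS hsupS hnegS hgensS a
end

section
/- A square-increasing IRL that is not idempotent has no idempotent subalgebra; in particular, it has no trivial (one-element) subalgebra. -/
namespace IRL

variable {α : Type*} [IRL α]

lemma neg_le_neg {a b : α} (h : a ≤ b) : neg b ≤ neg a := by
  have := res a 1 b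
  rw [mul_one, mul_one] at this
  exact this.mp h

lemma mul_le_mul_right' {a b : α} (h : a ≤ b) (c : α) : a * c ≤ b * c := by
  refine (res a c (b * c)).mpr ?_
  exact le_trans ((res b c (b * c)).mp le_rfl) (neg_le_neg h)

lemma mul_le_mul_left' {a b : α} (h : a ≤ b) (c : α) : c * a ≤ c * b := by
  rw [mul_comm c a, mul_comm c b]; exact mul_le_mul_right' h c

lemma neg_mul_self_le (x : α) : neg x * x ≤ neg 1 := by
  have := res (neg x) x (neg 1)
  rw [neg_neg, neg_neg, one_mul] at this
  exact this.mpr le_rfl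

/-- If `¬1` is idempotent in a square-increasing IRL, the whole algebra is idempotent. -/
lemma idem_of_f_idem (sq : ∀ x : α, x ≤ x * x)
    (hf : neg (1:α) * neg 1 = neg 1) : ∀ x : α, x * x = x := by
  -- first: neg 1 ≤ 1
  have hfle : neg (1 : α) ≤ 1 := by
    have := res (neg 1 : α) (neg 1) (neg 1)
    rw [neg_neg, one_mul] at this
    exact this.mp (le_of_eq hf)
  intro x
  have key : neg x * x ≤ neg x := by
    calc neg x * x ≤ (neg x * neg x) * x := mul_le_mul_right' (sq (neg x)) x
      _ = neg x * (neg x * x) := mul_assoc _ _ _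
      _ ≤ neg x * neg 1 := mul_le_mul_left' (neg_mul_self_le x) _
      _ ≤ neg x * 1 := mul_le_mul_left' hfle _
      _ = neg x := mul_one _
  have h2 : x * x ≤ x := (res x x x).mpr key
  exact le_antisymm h2 (sq x)

end IRL

open IRL in
/-- A square-increasing non-idempotent IRL has no idempotent subalgebra; in
particular no trivial (one-element) subalgebra. -/
theorem stmt6 {α : Type*} [IRL α] (sq : ∀ x : α, x ≤ x * x)
    (hni : ¬ ∀ x : α, x * x = x)
    (S : Set α) (h1 : (1 : α) ∈ S)
    (hmul : ∀ x ∈ S, ∀ y ∈ S, x * y ∈ S)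
    (hinf : ∀ x ∈ S, ∀ y ∈ S, x ⊓ y ∈ S)
    (hsup : ∀ x ∈ S, ∀ y ∈ S, x ⊔ y ∈ S)
    (hneg : ∀ x ∈ S, neg x ∈ S) :
    (∃ x ∈ S, x * x ≠ x) ∧ S ≠ {(1 : α)} := by
  have hfS : neg (1 : α) ∈ S := hneg 1 h1
  have hfni : neg (1 : α) * neg 1 ≠ neg 1 := fun hf => hni (idem_of_f_idem sq hf)
  refine ⟨⟨neg 1, hfS, hfni⟩, ?_⟩
  intro hS
  rw [hS] at hfS
  have : neg (1 : α) = 1 := hfS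
  apply hfni
  rw [this, one_mul]
end

section
/- Let K be a variety of square-increasing IRLs. Then K has no nontrivial idempotent member if and only if K satisfies the identity x ≤ f², where f := ¬e. -/
/-
If some `x ≰ f²` in `A ∈ K`, put `w := ¬(f²)`. Then `w ≤ e`, so `w` is idempotent, and
identifying `x` with `y` when `w·x = w·y` is a congruence. Its quotient lies in `K`, is
idempotent because `w·x² ≤ x`, and is nontrivial because `w·x ≤ f² = ¬w` already forces
`x ≤ f²`. Conversely, in an idempotent algebra satisfying `x ≤ f²` we get `x ≤ f ≤ e ≤ x`.
-/

universe u

/-- A bundled square-increasing involutive commutative residuated lattice. -/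
structure SqIRL : Type (u + 1) where
  carrier : Type u
  [lat : Lattice carrier]
  [mon : CommMonoid carrier]
  neg : carrier → carrier
  neg_neg : ∀ x : carrier, neg (neg x) = x
  res : ∀ x y z : carrier, x * y ≤ z ↔ neg z * y ≤ neg x
  sq : ∀ x : carrier, x ≤ x * x

attribute [instance] SqIRL.lat SqIRL.mon

/-- A homomorphism of square-increasing IRLs. -/
structure SqIRLHom (A B : SqIRL.{u}) where
  toFun : A.carrier → B.carrier
  map_mul : ∀ x y : A.carrier, toFun (x * y) = toFun x * toFun y
  map_one : toFun 1 = 1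
  map_inf : ∀ x y : A.carrier, toFun (x ⊓ y) = toFun x ⊓ toFun y
  map_sup : ∀ x y : A.carrier, toFun (x ⊔ y) = toFun x ⊔ toFun y
  map_neg : ∀ x : A.carrier, toFun (A.neg x) = B.neg (toFun x)

/-- The direct product of a family of square-increasing IRLs. -/
def SqIRL.prod (I : Type u) (f : I → SqIRL.{u}) : SqIRL.{u} where
  carrier := ∀ i, (f i).carrier
  neg x := fun i => (f i).neg (x i)
  neg_neg x := by funext i; exact (f i).neg_neg (x i)
  res x y z := by
    constructor
    · intro h i; exact ((f i).res (x i) (y i) (z i)).mp (h i)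
    · intro h i; exact ((f i).res (x i) (y i) (z i)).mpr (h i)
  sq x := fun i => (f i).sq (x i)

namespace SqIRL

variable {A : SqIRL.{u}} {w x y z : A.carrier}

-- In lemma names `f` is the paper's `f = ¬e`, so `fSq` stands for `A.neg 1 * A.neg 1`.

theorem neg_le_neg (h : x ≤ y) : A.neg y ≤ A.neg x := by
  simpa using (A.res x 1 y).mp (by simpa using h)

theorem le_neg_comm : x ≤ A.neg y ↔ y ≤ A.neg x :=
  ⟨fun h => by simpa only [A.neg_neg] using neg_le_neg h,
    fun h => by simpa only [A.neg_neg] using neg_le_neg h⟩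

theorem mul_le_neg_comm : x * y ≤ A.neg z ↔ z * y ≤ A.neg x := by
  simpa only [A.neg_neg] using A.res x y (A.neg z)

theorem mul_le_iff_le_neg : x * y ≤ z ↔ x ≤ A.neg (A.neg z * y) :=
  (A.res x y z).trans le_neg_comm

instance : IsOrderedMonoid A.carrier where
  mul_le_mul_left x y h z :=
    (A.res x z (y * z)).mpr (((A.res y z (y * z)).mp le_rfl).trans (neg_le_neg h))

theorem mul_sup (w x y : A.carrier) : w * (x ⊔ y) = w * x ⊔ w * y := by
  refine le_antisymm ?_
    (sup_le (mul_le_mul_right le_sup_left w) (mul_le_mul_right le_sup_right w))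
  rw [mul_comm, mul_le_iff_le_neg]
  exact sup_le (mul_le_iff_le_neg.mp (by rw [mul_comm]; exact le_sup_left))
    (mul_le_iff_le_neg.mp (by rw [mul_comm]; exact le_sup_right))

theorem mul_self_of_le_one (hw : w ≤ 1) : w * w = w :=
  le_antisymm (mul_le_of_le_one_left' hw) (A.sq w)

theorem mul_neg_self_le (x : A.carrier) : x * A.neg x ≤ A.neg 1 := by
  rw [mul_le_neg_comm, one_mul]

theorem le_neg_of_mul_le_neg (h : x * z ≤ A.neg z) : x ≤ A.neg z :=
  le_neg_comm.mp ((A.sq z).trans (mul_le_neg_comm.mp h))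

theorem neg_fSq_le_one : A.neg (A.neg 1 * A.neg 1) ≤ 1 := by
  simpa only [A.neg_neg] using neg_le_neg (A.sq (A.neg 1))

theorem neg_fSq_mul_mul_self_le (x : A.carrier) : A.neg (A.neg 1 * A.neg 1) * (x * x) ≤ x := by
  rw [← A.neg_neg x, mul_le_neg_comm, A.neg_neg, A.neg_neg]
  calc A.neg x * (x * x) ≤ A.neg x * A.neg x * (x * x) := mul_le_mul_left (A.sq _) _
    _ = x * A.neg x * (x * A.neg x) := by rw [mul_mul_mul_comm, mul_comm (A.neg x) x]
    _ ≤ A.neg 1 * A.neg 1 := mul_le_mul' (mul_neg_self_le x) (mul_neg_self_le x)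

theorem mul_le_mul_iff_mul_le (hw : w ≤ 1) : w * x ≤ w * y ↔ w * x ≤ y :=
  ⟨fun h => h.trans (mul_le_of_le_one_left' hw), fun h => by
    simpa only [← mul_assoc, mul_self_of_le_one hw] using mul_le_mul_right h w⟩

theorem mul_eq_mul_iff_mul_le (hw : w ≤ 1) : w * x = w * y ↔ w * x ≤ y ∧ w * y ≤ x := by
  rw [le_antisymm_iff, mul_le_mul_iff_mul_le hw, mul_le_mul_iff_mul_le hw]

theorem mul_inf_eq_mul_inf_mul (hw : w ≤ 1) (x y : A.carrier) :
    w * (x ⊓ y) = w * (w * x ⊓ w * y) := by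
  rw [mul_eq_mul_iff_mul_le hw]
  exact ⟨le_inf (mul_le_mul_right inf_le_left w) (mul_le_mul_right inf_le_right w),
    (mul_le_of_le_one_left' hw).trans
      (inf_le_inf (mul_le_of_le_one_left' hw) (mul_le_of_le_one_left' hw))⟩

theorem mul_neg_le_neg_of_mul_le (h : w * y ≤ x) : w * A.neg x ≤ A.neg y := by
  rw [mul_comm, ← A.neg_neg y, ← A.neg_neg x] at h
  simpa only [A.neg_neg, mul_comm w] using (A.res (A.neg x) w (A.neg y)).mpr h

def mulCon (w : A.carrier) (hw : w ≤ 1) : Con A.carrier where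
  toSetoid := Setoid.ker (w * ·)
  mul' {x y z t} hxy hzt := by
    simp only [Setoid.ker_def] at hxy hzt ⊢
    rw [← mul_self_of_le_one hw, mul_mul_mul_comm, hxy, hzt, mul_mul_mul_comm]

section Quotient

variable {hw : w ≤ 1}

theorem mulCon_iff : mulCon w hw x y ↔ w * x = w * y := Iff.rfl

instance : Max (mulCon w hw).Quotient where
  max p q := Con.liftOn₂ p q (fun x y => ((x ⊔ y : A.carrier) : (mulCon w hw).Quotient))
    fun x₁ x₂ y₁ y₂ h₁ h₂ => by
      rw [Con.eq, mulCon_iff, mul_sup, mul_sup, mulCon_iff.mp h₁, mulCon_iff.mp h₂]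

instance : Min (mulCon w hw).Quotient where
  min p q := Con.liftOn₂ p q (fun x y => ((x ⊓ y : A.carrier) : (mulCon w hw).Quotient))
    fun x₁ x₂ y₁ y₂ h₁ h₂ => by
      rw [Con.eq, mulCon_iff, mul_inf_eq_mul_inf_mul hw, mul_inf_eq_mul_inf_mul hw y₁,
        mulCon_iff.mp h₁, mulCon_iff.mp h₂]

theorem mulCon_coe_sup (x y : A.carrier) :
    ((x ⊔ y : A.carrier) : (mulCon w hw).Quotient) = (x : (mulCon w hw).Quotient) ⊔ y := rfl

theorem mulCon_coe_inf (x y : A.carrier) :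
    ((x ⊓ y : A.carrier) : (mulCon w hw).Quotient) = (x : (mulCon w hw).Quotient) ⊓ y := rfl

instance : Lattice (mulCon w hw).Quotient :=
  Lattice.mk'
    (fun a b => Con.induction_on₂ a b fun x y => by
      simp only [← mulCon_coe_sup, sup_comm])
    (fun a b c => Con.induction_on₂ a b fun x y => Con.induction_on c fun z => by
      simp only [← mulCon_coe_sup, sup_assoc])
    (fun a b => Con.induction_on₂ a b fun x y => by
      simp only [← mulCon_coe_inf, inf_comm])
    (fun a b c => Con.induction_on₂ a b fun x y => Con.induction_on c fun z => by
      simp only [← mulCon_coe_inf, inf_assoc])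
    (fun a b => Con.induction_on₂ a b fun x y => by
      simp only [← mulCon_coe_inf, ← mulCon_coe_sup, sup_inf_self])
    (fun a b => Con.induction_on₂ a b fun x y => by
      simp only [← mulCon_coe_sup, ← mulCon_coe_inf, inf_sup_self])

theorem mulCon_coe_le_coe : (x : (mulCon w hw).Quotient) ≤ y ↔ w * x ≤ y := by
  rw [← sup_eq_right, ← mulCon_coe_sup, Con.eq, mulCon_iff, mul_sup, sup_eq_right,
    mul_le_mul_iff_mul_le hw]

theorem mulCon_neg (h : mulCon w hw x y) : mulCon w hw (A.neg x) (A.neg y) := by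
  rw [mulCon_iff, mul_eq_mul_iff_mul_le hw] at h ⊢
  exact ⟨mul_neg_le_neg_of_mul_le h.2, mul_neg_le_neg_of_mul_le h.1⟩

end Quotient

variable (w) in
abbrev quot (hw : w ≤ 1) : SqIRL.{u} where
  carrier := (mulCon w hw).Quotient
  neg q := Con.liftOn q (fun x => (A.neg x : (mulCon w hw).Quotient))
    fun _ _ h => (Con.eq _).mpr (mulCon_neg h)
  neg_neg q := Con.induction_on q fun x => congrArg _ (A.neg_neg x)
  res := by
    rintro ⟨x⟩ ⟨y⟩ ⟨z⟩
    show ((x * y : A.carrier) : (mulCon w hw).Quotient) ≤ z ↔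
      ((A.neg z * y : A.carrier) : (mulCon w hw).Quotient) ≤ (A.neg x : A.carrier)
    rw [mulCon_coe_le_coe, mulCon_coe_le_coe, mul_left_comm w x, mul_left_comm w (A.neg z),
      A.res]
  sq q := Con.induction_on q fun x => by
    rw [← Con.coe_mul, mulCon_coe_le_coe]
    exact (mul_le_of_le_one_left' hw).trans (A.sq x)

variable (w) in
def quotHom (hw : w ≤ 1) : SqIRLHom A (quot w hw) where
  toFun x := x
  map_mul := Con.coe_mul
  map_one := rfl
  map_inf := mulCon_coe_inf
  map_sup := mulCon_coe_sup
  map_neg _ := rfl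

theorem quotHom_surjective (hw : w ≤ 1) : Function.Surjective (quotHom w hw).toFun :=
  fun q => Con.induction_on q fun x => ⟨x, rfl⟩

variable (A) in
abbrev idemQuot : SqIRL.{u} := quot (A.neg (A.neg 1 * A.neg 1)) neg_fSq_le_one

theorem idemQuot_mul_self (q : A.idemQuot.carrier) : q * q = q :=
  Con.induction_on q fun x => by
    rw [← Con.coe_mul, Con.eq, mulCon_iff, mul_eq_mul_iff_mul_le neg_fSq_le_one]
    exact ⟨neg_fSq_mul_mul_self_le x, (mul_le_of_le_one_left' neg_fSq_le_one).trans (A.sq x)⟩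

theorem idemQuot_coe_ne_coe_fSq (hx : ¬ x ≤ A.neg 1 * A.neg 1) :
    (x : A.idemQuot.carrier) ≠ ((A.neg 1 * A.neg 1 : A.carrier) : A.idemQuot.carrier) := by
  intro h
  rw [Con.eq, mulCon_iff] at h
  have hw : x * A.neg (A.neg 1 * A.neg 1) ≤ A.neg (A.neg (A.neg 1 * A.neg 1)) := by
    rw [A.neg_neg, mul_comm, h]
    exact mul_le_of_le_one_left' neg_fSq_le_one
  exact hx (by simpa only [A.neg_neg] using le_neg_of_mul_le_neg hw)

theorem subsingleton_of_idempotent_of_le_fSq (hidem : ∀ x : A.carrier, x * x = x)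
    (hle : ∀ x : A.carrier, x ≤ A.neg 1 * A.neg 1) : Subsingleton A.carrier := by
  have hle_f : ∀ x : A.carrier, x ≤ A.neg 1 := fun x => hidem (A.neg 1) ▸ hle x
  have hf : A.neg 1 ≤ 1 := by
    simpa only [one_mul, A.neg_neg] using mul_le_neg_comm.mp (hidem (A.neg 1)).le
  have hone : ∀ x : A.carrier, 1 ≤ x := fun x => by
    simpa only [A.neg_neg] using le_neg_comm.mp (hle_f (A.neg x))
  have heq : ∀ x : A.carrier, x = 1 := fun x => ((hle_f x).trans hf).antisymm (hone x)
  exact ⟨fun x y => (heq x).trans (heq y).symm⟩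

end SqIRL

theorem stmt8_general (K : SqIRL.{u} → Prop)
    (hH : ∀ A B : SqIRL.{u}, K A →
      (∃ h : SqIRLHom A B, Function.Surjective h.toFun) → K B) :
    (¬ ∃ A : SqIRL.{u}, K A ∧ (∀ x : A.carrier, x * x = x) ∧ ∃ x y : A.carrier, x ≠ y)
      ↔ (∀ A : SqIRL.{u}, K A → ∀ x : A.carrier, x ≤ A.neg 1 * A.neg 1) := by
  constructor
  · intro hno A hA x
    by_contra hx
    exact hno ⟨A.idemQuot, hH A _ hA ⟨_, SqIRL.quotHom_surjective _⟩, SqIRL.idemQuot_mul_self,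
      _, _, SqIRL.idemQuot_coe_ne_coe_fSq hx⟩
  · rintro hid ⟨A, hA, hidem, x, y, hxy⟩
    exact hxy ((SqIRL.subsingleton_of_idempotent_of_le_fSq hidem (hid A hA)).allEq x y)

/-- A variety (class closed under homomorphic images, subalgebras and products) of
square-increasing IRLs has no nontrivial idempotent member iff it satisfies
`x ≤ f²`, where `f := ¬e`. -/
theorem stmt8 (K : SqIRL.{u} → Prop)
    (hH : ∀ A B : SqIRL.{u}, K A →
      (∃ h : SqIRLHom A B, Function.Surjective h.toFun) → K B)
    (hS : ∀ A B : SqIRL.{u}, K A →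
      (∃ h : SqIRLHom B A, Function.Injective h.toFun) → K B)
    (hP : ∀ (I : Type u) (f : I → SqIRL.{u}), (∀ i, K (f i)) → K (SqIRL.prod I f)) :
    (¬ ∃ A : SqIRL.{u}, K A ∧ (∀ x : A.carrier, x * x = x) ∧ ∃ x y : A.carrier, x ≠ y)
      ↔ (∀ A : SqIRL.{u}, K A → ∀ x : A.carrier, x ≤ A.neg 1 * A.neg 1) :=
  stmt8_general K hH
end

section
/- A De Morgan monoid is integral (e is its greatest element) if and only if it is a Boolean algebra in which fusion coincides with meet. -/
/-- A De Morgan monoid: a distributive square-increasing involutive commutative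
residuated lattice. -/
class DMM (α : Type*) extends DistribLattice α, CommMonoid α where
  neg : α → α
  neg_neg : ∀ x : α, neg (neg x) = x
  res : ∀ x y z : α, x * y ≤ z ↔ neg z * y ≤ neg x
  sq : ∀ x : α, x ≤ x * x

open DMM in
/-- A De Morgan monoid is integral iff it is a Boolean algebra in which fusion
coincides with meet: the lattice is bounded, `neg x` is a complement of `x`,
and `x * y = x ⊓ y`. -/
theorem stmt9 {α : Type*} [DMM α] :
    (∀ x : α, x ≤ 1) ↔
      ((∃ bot top : α, (∀ x : α, bot ≤ x ∧ x ≤ top) ∧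
        (∀ x : α, x ⊓ neg x = bot ∧ x ⊔ neg x = top)) ∧
       (∀ x y : α, x * y = x ⊓ y)) := by
  constructor
  · intro h
    have leiff : ∀ x z : α, x ≤ z ↔ neg z ≤ neg x := by
      intro x z
      have := res x 1 z
      simpa using this
    have anti : ∀ x z : α, x ≤ z → neg z ≤ neg x := fun x z hx => (leiff x z).mp hx
    have mono : ∀ x x' y : α, x ≤ x' → x * y ≤ x' * y := by
      intro x x' y hx
      rw [res]
      have h1 : neg (x' * y) * y ≤ neg x' := (res x' y (x' * y)).mp le_rfl
      exact h1.trans (anti x x' hx)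
    have fus : ∀ x y : α, x * y = x ⊓ y := by
      intro x y
      apply le_antisymm
      · apply le_inf
        · have : x * y ≤ x * 1 := by
            rw [mul_comm x y, mul_comm x 1]; exact mono y 1 x (h y)
          simpa using this
        · have : x * y ≤ 1 * y := mono x 1 y (h x)
          simpa using this
      · refine (DMM.sq (x ⊓ y)).trans ?_
        have h1 : (x ⊓ y) * (x ⊓ y) ≤ x * (x ⊓ y) := mono _ _ _ inf_le_left
        have h2 : x * (x ⊓ y) ≤ x * y := by
          rw [mul_comm x (x ⊓ y), mul_comm x y]; exact mono _ _ _ inf_le_right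
        exact h1.trans h2
    have botle : ∀ x : α, neg 1 ≤ x := by
      intro x
      have := anti (neg x) 1 (h (neg x))
      rwa [DMM.neg_neg] at this
    have compl1 : ∀ x : α, x ⊓ neg x = neg 1 := by
      intro x
      apply le_antisymm
      · rw [← fus]
        rw [res]
        simp [DMM.neg_neg]
      · exact le_inf (botle x) (botle (neg x))
    refine ⟨⟨neg 1, 1, fun x => ⟨botle x, h x⟩, fun x => ⟨compl1 x, ?_⟩⟩, fus⟩
    apply le_antisymm (sup_le (h x) (h (neg x)))
    have h1 : neg (x ⊔ neg x) ≤ neg 1 := by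
      have ha : neg (x ⊔ neg x) ≤ x := by
        have := anti (neg x) (x ⊔ neg x) le_sup_right
        rwa [DMM.neg_neg] at this
      have hb : neg (x ⊔ neg x) ≤ neg x := anti x (x ⊔ neg x) le_sup_left
      exact (le_inf ha hb).trans (compl1 x).le
    have := anti (neg (x ⊔ neg x)) (neg 1) h1
    rwa [DMM.neg_neg, DMM.neg_neg] at this
  · rintro ⟨-, fus⟩ x
    calc x = x * 1 := (mul_one x).symm
    _ = x ⊓ 1 := fus x 1
    _ ≤ 1 := inf_le_right
end

section
/- Let A be a bounded De Morgan monoid in which e is join-prime, with extrema ⊥ and ⊤. Then A is rigorously compact: ⊤·a = ⊤ whenever a ≠ ⊥. -/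
open DMM in
theorem stmt12 {α : Type*} [DMM α]
    (hjp : ∀ a b : α, (1 : α) ≤ a ⊔ b → (1 : α) ≤ a ∨ (1 : α) ≤ b)
    (bot top : α) (hbot : ∀ a : α, bot ≤ a) (htop : ∀ a : α, a ≤ top) :
    ∀ a : α, a ≠ bot → top * a = top := by
  intro a ha
  -- antitonicity of neg
  have anti : ∀ x y : α, x ≤ y → neg y ≤ neg x := by
    intro x y h
    have := (res x 1 y).mp (by simpa using h)
    simpa using this
  -- monotonicity of multiplication
  have mono : ∀ x x' y : α, x ≤ x' → x * y ≤ x' * y := by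
    intro x x' y h
    exact (res x y (x' * y)).mpr (le_trans ((res x' y (x' * y)).mp le_rfl) (anti _ _ h))
  have negbot : neg bot = top := by
    refine le_antisymm (htop _) ?_
    have := anti _ _ (hbot (neg top))
    rwa [DMM.neg_neg] at this
  -- x * neg x ≤ neg 1
  have xnx : ∀ x : α, x * neg x ≤ neg 1 := by
    intro x
    rw [res x (neg x) (neg 1), DMM.neg_neg, one_mul]
  -- LEM: 1 ≤ x ⊔ neg x
  have lem : ∀ x : α, (1 : α) ≤ x ⊔ neg x := by
    intro x
    have h1 : neg (x ⊔ neg x) ≤ x ⊓ neg x := by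
      refine le_inf ?_ (anti _ _ le_sup_left)
      have := anti _ _ (le_sup_right (a := x) (b := neg x))
      rwa [DMM.neg_neg] at this
    have h2 : neg (x ⊔ neg x) ≤ neg 1 := by
      calc neg (x ⊔ neg x) ≤ (x ⊓ neg x) * (x ⊓ neg x) := le_trans h1 (sq _)
        _ ≤ x * neg x := by
            calc (x ⊓ neg x) * (x ⊓ neg x) ≤ x * (x ⊓ neg x) := mono _ _ _ inf_le_left
              _ = (x ⊓ neg x) * x := mul_comm _ _
              _ ≤ neg x * x := mono _ _ _ inf_le_right
              _ = x * neg x := mul_comm _ _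
        _ ≤ neg 1 := xnx x
    have := anti _ _ h2
    rwa [DMM.neg_neg, DMM.neg_neg] at this
  rcases hjp _ _ (lem (a * top)) with h | h
  · -- 1 ≤ a * top : then top ≤ top * a
    refine le_antisymm (htop _) ?_
    calc top = top * 1 := (mul_one _).symm
      _ ≤ top * (a * top) := by
          rw [mul_comm top (a * top), mul_comm top 1]
          exact mono _ _ _ h
      _ = (top * top) * a := by rw [mul_comm a top, ← mul_assoc]
      _ = top * a := by
          rw [le_antisymm (htop (top * top)) (sq top)]
  · -- 1 ≤ neg (a * top) : then a = bot, contradiction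
    exfalso
    apply ha
    refine le_antisymm ?_ (hbot a)
    have key : a * neg (a * top) ≤ bot := by
      rw [res a (neg (a * top)) bot, negbot, mul_comm,
        res (neg (a * top)) top (neg a), DMM.neg_neg, DMM.neg_neg]
    calc a = a * 1 := (mul_one _).symm
      _ ≤ a * neg (a * top) := by
          rw [mul_comm a 1, mul_comm a (neg (a * top))]
          exact mono _ _ _ h
      _ ≤ bot := key
end

section
/- Let A be a non-idempotent De Morgan monoid in which e is join-prime, and let a ∈ A be idempotent (a² = a) with a ≥ f, where f := ¬e. Then a > e. In particular, f² > e. -/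
namespace DMM

variable {α : Type*} [DMM α]

lemma neg_anti {x y : α} (h : x ≤ y) : neg y ≤ neg x := by
  have := (res x 1 y).mp (by simpa using h)
  simpa using this

lemma le_iff_neg {x y : α} : x ≤ y ↔ neg y ≤ neg x := by
  constructor
  · exact neg_anti
  · intro h
    have := neg_anti h
    rwa [neg_neg, neg_neg] at this

lemma mul_mono_left {x y : α} (z : α) (h : x ≤ y) : x * z ≤ y * z := by
  have h1 : neg (y * z) * z ≤ neg y := (res y z (y * z)).mp le_rfl
  exact (res x z (y * z)).mpr (h1.trans (neg_anti h))

lemma mul_mono_right (x : α) {y z : α} (h : y ≤ z) : x * y ≤ x * z := by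
  rw [mul_comm x y, mul_comm x z]; exact mul_mono_left x h

lemma mul_le_f_iff {x y : α} : x * y ≤ neg 1 ↔ x ≤ neg y := by
  rw [res x y (neg 1), neg_neg, one_mul]
  constructor
  · intro h
    have := neg_anti h
    rwa [neg_neg] at this
  · intro h
    have := neg_anti h
    rwa [neg_neg] at this

lemma mul_neg_self_le (x : α) : x * neg x ≤ neg 1 := mul_le_f_iff.mpr (neg_neg x).ge

lemma inf_le_mul (x y : α) : x ⊓ y ≤ x * y := by
  refine (sq (x ⊓ y)).trans ?_
  calc (x ⊓ y) * (x ⊓ y) ≤ x * (x ⊓ y) := mul_mono_left _ inf_le_left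
    _ ≤ x * y := mul_mono_right _ inf_le_right

lemma neg_inf_le (x y : α) : neg (x ⊓ y) ≤ neg x ⊔ neg y := by
  have h : neg (neg x ⊔ neg y) ≤ x ⊓ y := by
    refine le_inf ?_ ?_
    · have := neg_anti (le_sup_left : neg x ≤ neg x ⊔ neg y)
      rwa [neg_neg] at this
    · have := neg_anti (le_sup_right : neg y ≤ neg x ⊔ neg y)
      rwa [neg_neg] at this
  have := neg_anti h
  rwa [neg_neg] at this

lemma one_le_sup_neg (x : α) : (1 : α) ≤ x ⊔ neg x := by
  have h1 : x ⊓ neg x ≤ neg 1 := (inf_le_mul x (neg x)).trans (mul_neg_self_le x)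
  have h2 : (1 : α) ≤ neg (x ⊓ neg x) := by
    have := neg_anti h1
    rwa [neg_neg] at this
  refine h2.trans ((neg_inf_le x (neg x)).trans ?_)
  rw [neg_neg, sup_comm]

lemma f_sq_le_iff : (neg 1 : α) * neg 1 ≤ neg 1 ↔ (neg 1 : α) ≤ 1 := by
  rw [res (neg 1) (neg 1) (neg 1), neg_neg, one_mul]

/-- If f ≤ e, the algebra is idempotent. -/
lemma idem_of_f_le_one (hfe : (neg 1 : α) ≤ 1) (x : α) : x * x = x := by
  set m := x ⊓ neg x with hm
  have hmf : m ≤ neg 1 := (inf_le_mul x (neg x)).trans (mul_neg_self_le x)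
  have hm1 : m ≤ 1 := hmf.trans hfe
  have hmm : m * m = m :=
    le_antisymm (by simpa using mul_mono_left m hm1) (sq m)
  have hmx : m * x ≤ neg 1 := by
    calc m * x ≤ neg x * x := mul_mono_left x inf_le_right
      _ = x * neg x := mul_comm _ _
      _ ≤ neg 1 := mul_neg_self_le x
  have key : m * (x * x) ≤ neg 1 := by
    have h1 : m * (x * x) = (m * x) * (m * x) := by
      rw [mul_mul_mul_comm m x m x, hmm]
    rw [h1]
    calc (m * x) * (m * x) ≤ neg 1 * (m * x) := mul_mono_left _ hmx
      _ ≤ neg 1 * neg 1 := mul_mono_right _ hmx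
      _ ≤ neg 1 * 1 := mul_mono_right _ hfe
      _ = neg 1 := mul_one _
  have h2 : x * x ≤ neg m := by
    have := neg_anti (mul_le_f_iff.mp key)
    rwa [neg_neg] at this
  have h3 : x * x ≤ x ⊔ neg x := by
    refine h2.trans ((neg_inf_le x (neg x)).trans ?_)
    rw [neg_neg, sup_comm]
  have h4 : x * x ≤ x := by
    have hd : x * x = ((x * x) ⊓ x) ⊔ ((x * x) ⊓ neg x) := by
      rw [← inf_sup_left, inf_eq_left.mpr h3]
    rw [hd]
    refine sup_le inf_le_right ?_
    calc (x * x) ⊓ neg x ≤ (x * x) * neg x := inf_le_mul _ _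
      _ = x * (x * neg x) := mul_assoc _ _ _
      _ ≤ x * neg 1 := mul_mono_right _ (mul_neg_self_le x)
      _ ≤ x * 1 := mul_mono_right _ hfe
      _ = x := mul_one _
  exact le_antisymm h4 (sq x)

end DMM

open DMM in
theorem stmt13 {α : Type*} [DMM α]
    (hjp : ∀ a b : α, (1 : α) ≤ a ⊔ b → (1 : α) ≤ a ∨ (1 : α) ≤ b)
    (hni : ∃ b : α, b * b ≠ b)
    (a : α) (hidem : a * a = a) (ha : neg (1 : α) ≤ a) :
    1 < a ∧ (1 : α) < neg 1 * neg 1 := by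
  have hfe : ¬ (neg 1 : α) ≤ 1 := by
    intro h
    obtain ⟨b, hb⟩ := hni
    exact hb (idem_of_f_le_one h b)
  constructor
  · have h1a : (1 : α) ≤ a := by
      rcases hjp a (neg a) (one_le_sup_neg a) with h | h
      · exact h
      · exfalso
        have haf : a ≤ neg 1 := by
          have := neg_anti h; rwa [DMM.neg_neg] at this
        have hae : a = neg 1 := le_antisymm haf ha
        apply hfe
        rw [← f_sq_le_iff, ← hae, hidem, hae]
    refine h1a.lt_of_ne ?_
    intro h
    exact hfe (h ▸ ha)
  · have h1f : (1 : α) ≤ neg 1 * neg 1 := by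
      rcases hjp (neg 1 * neg 1) (neg (neg 1 * neg 1)) (one_le_sup_neg _) with h | h
      · exact h
      · exfalso
        have hff : neg 1 * neg 1 ≤ (neg 1 : α) := by
          have := neg_anti h; rwa [DMM.neg_neg] at this
        exact hfe (f_sq_le_iff.mp hff)
    refine h1f.lt_of_ne ?_
    intro h
    exact hfe ((DMM.sq (neg 1 : α)).trans h.ge)
end

section
/- Let A be a De Morgan monoid in which e is join-prime, and let a, b ∈ A be idempotent elements with f ≤ a and f ≤ b (where f := ¬e). Then a ≤ b or b ≤ a. -/
open DMM in
theorem stmt14 {α : Type*} [DMM α]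
    (hjp : ∀ a b : α, (1 : α) ≤ a ⊔ b → (1 : α) ≤ a ∨ (1 : α) ≤ b)
    (a b : α) (hidema : a * a = a) (hidemb : b * b = b)
    (hfa : neg (1 : α) ≤ a) (hfb : neg (1 : α) ≤ b) :
    a ≤ b ∨ b ≤ a := by
  have nle : ∀ x z : α, x ≤ z ↔ neg z ≤ neg x := by
    intro x z
    have h := res x 1 z
    simpa using h
  have mono : ∀ x y z : α, x ≤ y → x * z ≤ y * z := by
    intro x y z h
    rw [res]
    exact le_trans ((res y z (y * z)).mp le_rfl) ((nle x y).mp h)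
  have negone : ∀ x : α, x * neg x ≤ neg 1 := by
    intro x
    rw [res, DMM.neg_neg, one_mul]
  set f := neg (1 : α) with hf
  set c := (a * neg b) ⊓ (b * neg a) with hc
  have key : c ≤ f := by
    have h2 : c * c ≤ (a * neg b) * (b * neg a) := by
      calc c * c ≤ (a * neg b) * c := mono _ _ _ inf_le_left
        _ = c * (a * neg b) := mul_comm _ _
        _ ≤ (b * neg a) * (a * neg b) := mono _ _ _ inf_le_right
        _ = (a * neg b) * (b * neg a) := mul_comm _ _
    have h3 : (a * neg b) * (b * neg a) = (a * neg a) * (b * neg b) := by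
      rw [mul_mul_mul_comm, mul_comm (neg b) (neg a), ← mul_mul_mul_comm]
    have h4 : (a * neg a) * (b * neg b) ≤ b * (b * neg b) :=
      mono _ _ _ (le_trans (negone a) hfb)
    have h5 : b * (b * neg b) = b * neg b := by
      rw [← mul_assoc, hidemb]
    calc c ≤ c * c := sq c
      _ ≤ (a * neg b) * (b * neg a) := h2
      _ = (a * neg a) * (b * neg b) := h3
      _ ≤ b * (b * neg b) := h4
      _ = b * neg b := h5
      _ ≤ f := negone b
  have hone : (1 : α) ≤ neg (a * neg b) ⊔ neg (b * neg a) := by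
    have h1 : (1 : α) ≤ neg c := by
      have h := (nle c f).mp key
      rw [hf, DMM.neg_neg] at h
      exact h
    refine le_trans h1 ?_
    rw [nle, DMM.neg_neg]
    refine le_inf ?_ ?_
    · rw [nle, DMM.neg_neg]; exact le_sup_left
    · rw [nle, DMM.neg_neg]; exact le_sup_right
  rcases hjp _ _ hone with h | h
  · left
    have h1 : a * neg b ≤ f := by
      have h' := (nle 1 (neg (a * neg b))).mp h
      rwa [DMM.neg_neg] at h'
    have h2 := (res a (neg b) f).mp h1
    rw [hf, DMM.neg_neg, one_mul] at h2
    exact (nle a b).mpr h2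
  · right
    have h1 : b * neg a ≤ f := by
      have h' := (nle 1 (neg (b * neg a))).mp h
      rwa [DMM.neg_neg] at h'
    have h2 := (res b (neg a) f).mp h1
    rw [hf, DMM.neg_neg, one_mul] at h2
    exact (nle b a).mpr h2
end

section
/- Let A be a De Morgan monoid in which e is join-prime and fusion is non-idempotent, and suppose f² ≤ a ∈ A, where f := ¬e. Then ¬a < a, and the interval [¬a, a] = {b : ¬a ≤ b ≤ a} is closed under ·, ∧, ∨, ¬ and contains e (i.e., it is a subalgebra). In particular, [¬(f²), f²] is a subalgebra. -/
section Aux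
open DMM
variable {α : Type*} [DMM α]

lemma dmm_neg_le_neg {x y : α} (h : x ≤ y) : neg y ≤ neg x := by
  have h1 := res x 1 y
  rw [mul_one, mul_one] at h1
  exact h1.mp h

lemma dmm_mul_le_mul_right {x y : α} (z : α) (h : x ≤ y) : x * z ≤ y * z := by
  have h1 : neg (y * z) * z ≤ neg y := (res y z (y * z)).mp le_rfl
  exact (res x z (y * z)).mpr (h1.trans (dmm_neg_le_neg h))

lemma dmm_mul_le_mul {x y u v : α} (h1 : x ≤ y) (h2 : u ≤ v) : x * u ≤ y * v := by
  calc x * u ≤ y * u := dmm_mul_le_mul_right u h1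
    _ = u * y := mul_comm _ _
    _ ≤ v * y := dmm_mul_le_mul_right y h2
    _ = y * v := mul_comm _ _

lemma dmm_mul_neg_self (x : α) : x * neg x ≤ neg 1 := by
  refine (res x (neg x) (neg 1)).mpr ?_
  rw [DMM.neg_neg, one_mul]

lemma dmm_one_le_sup_neg (x : α) : (1 : α) ≤ x ⊔ neg x := by
  have h1 : x ⊓ neg x ≤ neg 1 :=
    le_trans (sq _) (le_trans (dmm_mul_le_mul inf_le_left inf_le_right)
      (dmm_mul_neg_self x))
  have ha : neg (x ⊔ neg x) ≤ x := by
    have h2 := dmm_neg_le_neg (le_sup_right (a := x) (b := neg x))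
    rwa [DMM.neg_neg] at h2
  have h2 : neg (x ⊔ neg x) ≤ neg 1 :=
    le_trans (le_inf ha (dmm_neg_le_neg le_sup_left)) h1
  calc (1 : α) = neg (neg 1) := (DMM.neg_neg 1).symm
    _ ≤ neg (neg (x ⊔ neg x)) := dmm_neg_le_neg h2
    _ = x ⊔ neg x := DMM.neg_neg _

lemma dmm_idem_of_f_le_one (hf : (neg 1 : α) ≤ 1) (x : α) : x * x = x := by
  refine le_antisymm ?_ (sq x)
  have h1 : neg x * x ≤ 1 := by
    have h2 := dmm_mul_neg_self (neg x)
    rw [DMM.neg_neg] at h2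
    exact h2.trans hf
  refine (res x x x).mpr ?_
  calc neg x * x ≤ (neg x * neg x) * x := dmm_mul_le_mul_right x (sq (neg x))
    _ = neg x * (neg x * x) := mul_assoc _ _ _
    _ ≤ neg x * 1 := dmm_mul_le_mul le_rfl h1
    _ = neg x := mul_one _

end Aux

open DMM in
/-- In a non-idempotent FSI De Morgan monoid, for `f² ≤ a` the interval `[¬a, a]`
is a subalgebra (contains `e` and is closed under the operations), and `¬a < a`.
In particular this holds for `a = f²`. -/
theorem stmt15 {α : Type*} [DMM α]
    (hjp : ∀ a b : α, (1 : α) ≤ a ⊔ b → (1 : α) ≤ a ∨ (1 : α) ≤ b)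
    (hni : ∃ b : α, b * b ≠ b)
    (a : α) (ha : neg (1 : α) * neg 1 ≤ a) :
    neg a < a ∧
    (1 : α) ∈ Set.Icc (neg a) a ∧
    (∀ x ∈ Set.Icc (neg a) a, ∀ y ∈ Set.Icc (neg a) a,
      x * y ∈ Set.Icc (neg a) a ∧ x ⊓ y ∈ Set.Icc (neg a) a ∧
      x ⊔ y ∈ Set.Icc (neg a) a) ∧
    (∀ x ∈ Set.Icc (neg a) a, neg x ∈ Set.Icc (neg a) a) := by
  -- `f ≤ 1` is impossible (it would force idempotency)
  have hno : ¬ ((neg 1 : α) ≤ 1) := by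
    intro hf
    obtain ⟨b, hb⟩ := hni
    exact hb (dmm_idem_of_f_le_one hf b)
  -- 1 ≤ f * f
  have h1ff : (1 : α) ≤ neg 1 * neg 1 := by
    rcases hjp _ _ (dmm_one_le_sup_neg (neg (1 : α) * neg 1)) with h | h
    · exact h
    · exfalso
      apply hno
      have h2 : (neg 1 : α) * neg 1 ≤ neg 1 := by
        have h3 := dmm_neg_le_neg h
        rwa [DMM.neg_neg] at h3
      have h4 := (res (neg (1 : α)) (neg 1) (neg 1)).mp h2
      rwa [DMM.neg_neg, one_mul] at h4
  -- t * f ≤ 1 where t = ¬(f²)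
  have tf : neg ((neg 1 : α) * neg 1) * neg 1 ≤ 1 := by
    have h1 := (res (neg (1 : α)) (neg 1) (neg 1 * neg 1)).mp le_rfl
    rwa [DMM.neg_neg] at h1
  have hta : neg a ≤ neg ((neg 1 : α) * neg 1) := dmm_neg_le_neg ha
  have ht1 : neg ((neg 1 : α) * neg 1) ≤ 1 := by
    have h1 := dmm_neg_le_neg (sq (neg (1 : α)))
    rwa [DMM.neg_neg] at h1
  have hne1 : neg a ≤ 1 := hta.trans ht1
  have h1a : (1 : α) ≤ a := h1ff.trans ha
  have hnaa : neg a ≤ a := hne1.trans h1a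
  -- ¬a is idempotent
  have hnn : neg a * neg a = neg a := by
    refine le_antisymm ?_ (sq _)
    calc neg a * neg a ≤ 1 * neg a := dmm_mul_le_mul_right _ hne1
      _ = neg a := one_mul _
  -- f * ¬a ≤ ¬a
  have hfn : neg 1 * neg a ≤ neg a := by
    calc neg 1 * neg a = neg 1 * (neg a * neg a) := by rw [hnn]
      _ = (neg 1 * neg a) * neg a := (mul_assoc _ _ _).symm
      _ ≤ (neg 1 * neg (neg 1 * neg 1)) * neg a :=
          dmm_mul_le_mul_right _ (dmm_mul_le_mul le_rfl hta)
      _ = (neg (neg 1 * neg 1) * neg 1) * neg a := by rw [mul_comm (neg 1)]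
      _ ≤ 1 * neg a := dmm_mul_le_mul_right _ tf
      _ = neg a := one_mul _
  -- a * ¬a ≤ 1
  have han : a * neg a ≤ 1 := by
    refine (res a (neg a) 1).mpr ?_
    exact le_trans (le_of_eq rfl) hfn
  have hna1 : neg a * a ≤ 1 := by rw [mul_comm]; exact han
  -- a is idempotent (a * a ≤ a)
  have haa : a * a ≤ a := by
    refine (res a a a).mpr ?_
    calc neg a * a = (neg a * neg a) * a := by rw [hnn]
      _ = neg a * (neg a * a) := mul_assoc _ _ _
      _ ≤ neg a * 1 := dmm_mul_le_mul le_rfl hna1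
      _ = neg a := mul_one _
  refine ⟨lt_of_le_of_ne hnaa ?_, ⟨hne1, h1a⟩, ?_, ?_⟩
  · intro heq
    apply hno
    have ha1 : a = 1 := le_antisymm (heq ▸ hne1) h1a
    have : (neg 1 : α) = 1 := by
      calc (neg 1 : α) = neg a := by rw [ha1]
        _ = a := heq
        _ = 1 := ha1
    exact le_of_eq this
  · intro x hx y hy
    refine ⟨⟨?_, ?_⟩, ⟨le_inf hx.1 hy.1, le_trans inf_le_left hx.2⟩,
      ⟨le_trans hx.1 le_sup_left, sup_le hx.2 hy.2⟩⟩
    · exact le_trans (sq (neg a)) (dmm_mul_le_mul hx.1 hy.1)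
    · exact le_trans (dmm_mul_le_mul hx.2 hy.2) haa
  · intro x hx
    refine ⟨dmm_neg_le_neg hx.2, ?_⟩
    have h1 := dmm_neg_le_neg hx.1
    rwa [DMM.neg_neg] at h1
end

section
/- Let A be a square-increasing IRL with e < f, where f := ¬e. Then the set {¬(f²), e, f, f²} consists of four distinct elements, forms a chain ¬(f²) < e < f < f², and is closed under ·, ∧, ∨, ¬; hence the four-element De Morgan monoid C₄ embeds into A. -/
/-!
Write `f = ¬e` and `a = ¬(f²)`. Square-increasingness makes `f² · f = f²`: the inequality `≤`
residuates to `a · f² ≤ e`, and `a · f² ≤ (a · f)² ≤ a · f ≤ e`. Residuating once more gives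
`a · f = a`, so `a` absorbs `f` and `f²`, and `f²` is idempotent. With `a ≤ e < f ≤ f²` the
multiplication table of `C₄` follows, and `¬` swaps `a ↔ f²` and `e ↔ f`.
-/

lemma IsChain.inf_mem {β : Type*} [Lattice β] {s : Set β} (hs : IsChain (· ≤ ·) s)
    {x y : β} (hx : x ∈ s) (hy : y ∈ s) : x ⊓ y ∈ s := by
  rcases hs.total hx hy with h | h
  · rwa [inf_of_le_left h]
  · rwa [inf_of_le_right h]

lemma IsChain.sup_mem {β : Type*} [Lattice β] {s : Set β} (hs : IsChain (· ≤ ·) s)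
    {x y : β} (hx : x ∈ s) (hy : y ∈ s) : x ⊔ y ∈ s := by
  rcases hs.total hx hy with h | h
  · rwa [sup_of_le_right h]
  · rwa [sup_of_le_left h]

lemma isChain_insert_insert_pair {β : Type*} [Preorder β] {a b c d : β}
    (hab : a ≤ b) (hbc : b ≤ c) (hcd : c ≤ d) : IsChain (· ≤ ·) ({a, b, c, d} : Set β) := by
  refine (((IsChain.pair hcd).insert ?_).insert ?_) <;>
    simp only [Set.mem_insert_iff, Set.mem_singleton_iff] <;>
    rintro _ (rfl | rfl | rfl) _ <;> exact .inl (by order)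

namespace IRL

variable {α : Type*} [IRL α] {x y : α}

lemma neg_le_neg_s17 (h : x ≤ y) : neg y ≤ neg x := by
  simpa using (res x 1 y).mp (by simpa using h)

instance : IsOrderedMonoid α where
  mul_le_mul_left x y h z :=
    (res x z (y * z)).mpr (((res y z (y * z)).mp le_rfl).trans (neg_le_neg_s17 h))

lemma neg_mul_mul_le (x y : α) : neg (x * y) * y ≤ neg x :=
  (res x y (x * y)).mp le_rfl

lemma mul_mul_self_le_one_of_mul_le_one (sq : ∀ x : α, x ≤ x * x) (h : x * y ≤ 1) :
    x * (y * y) ≤ 1 :=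
  calc x * (y * y) ≤ (x * x) * (y * y) := mul_le_mul_left (sq x) _
    _ = (x * y) * (x * y) := mul_mul_mul_comm x x y y
    _ ≤ x * y := mul_le_of_le_one_left' h
    _ ≤ 1 := h

lemma neg_neg_one_mul_self_le_one (sq : ∀ x : α, x ≤ x * x) : neg (neg 1 * neg 1 : α) ≤ 1 := by
  simpa only [IRL.neg_neg] using neg_le_neg_s17 (sq (neg 1 : α))

lemma neg_one_lt_mul_self (sq : ∀ x : α, x ≤ x * x) (h : (1 : α) < neg 1) :
    (neg 1 : α) < neg 1 * neg 1 := by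
  refine (sq _).lt_of_ne fun hf => h.not_ge ?_
  simpa only [IRL.neg_neg, one_mul] using (res (neg 1 : α) (neg 1) (neg 1)).mp hf.ge

lemma neg_neg_one_mul_self_lt_one (sq : ∀ x : α, x ≤ x * x) (h : (1 : α) < neg 1) :
    neg (neg 1 * neg 1 : α) < 1 := by
  refine (neg_neg_one_mul_self_le_one sq).lt_of_ne fun ha => (neg_one_lt_mul_self sq h).ne' ?_
  simpa only [IRL.neg_neg] using congrArg neg ha

lemma neg_one_mul_neg_one_mul_self (sq : ∀ x : α, x ≤ x * x) :
    (neg 1 : α) * (neg 1 * neg 1) = neg 1 * neg 1 := by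
  refine le_antisymm ?_ ?_
  · have hf : neg (neg 1 * neg 1 : α) * neg 1 ≤ 1 := by
      simpa only [IRL.neg_neg] using neg_mul_mul_le (neg 1 : α) (neg 1)
    refine (res (neg 1 : α) _ _).mpr ?_
    simpa only [IRL.neg_neg] using mul_mul_self_le_one_of_mul_le_one sq hf
  · exact mul_le_mul_right (sq _) _

lemma neg_one_mul_self_mul_self (sq : ∀ x : α, x ≤ x * x) :
    ((neg 1 : α) * neg 1) * (neg 1 * neg 1) = neg 1 * neg 1 := by
  rw [mul_assoc, neg_one_mul_neg_one_mul_self sq, neg_one_mul_neg_one_mul_self sq]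

lemma neg_neg_one_mul_self_mul_self (sq : ∀ x : α, x ≤ x * x) :
    neg (neg 1 * neg 1 : α) * neg (neg 1 * neg 1) = neg (neg 1 * neg 1) :=
  le_antisymm (mul_le_of_le_one_left' (neg_neg_one_mul_self_le_one sq)) (sq _)

lemma neg_neg_one_mul_self_mul_neg_one (sq : ∀ x : α, x ≤ x * x) (h : (1 : α) ≤ neg 1) :
    neg (neg 1 * neg 1 : α) * neg 1 = neg (neg 1 * neg 1) := by
  refine le_antisymm ?_ ?_
  · refine (res _ _ _).mpr ?_
    rw [IRL.neg_neg, mul_comm, neg_one_mul_neg_one_mul_self sq]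
  · calc neg (neg 1 * neg 1 : α) ≤ neg (neg 1 * neg 1) * neg (neg 1 * neg 1) := sq _
      _ ≤ neg (neg 1 * neg 1) * neg 1 :=
        mul_le_mul_right ((neg_neg_one_mul_self_le_one sq).trans h) _

lemma neg_neg_one_mul_self_mul_neg_one_mul_self (sq : ∀ x : α, x ≤ x * x) (h : (1 : α) ≤ neg 1) :
    neg (neg 1 * neg 1 : α) * (neg 1 * neg 1) = neg (neg 1 * neg 1) := by
  rw [← mul_assoc, neg_neg_one_mul_self_mul_neg_one sq h, neg_neg_one_mul_self_mul_neg_one sq h]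

end IRL

open IRL in
/-- If `e < f` in a square-increasing IRL, then `{¬(f²), e, f, f²}` is a
four-element chain `¬(f²) < e < f < f²` closed under the operations; hence the
four-element De Morgan monoid `C₄` embeds into the algebra. -/
theorem stmt17 {α : Type*} [IRL α] (sq : ∀ x : α, x ≤ x * x)
    (hef : (1 : α) < neg 1) :
    neg ((neg 1 : α) * neg 1) < 1 ∧ (1 : α) < neg 1 ∧ (neg 1 : α) < neg 1 * neg 1 ∧
    (∀ x ∈ ({neg ((neg 1 : α) * neg 1), 1, neg 1, neg 1 * neg 1} : Set α),
     ∀ y ∈ ({neg ((neg 1 : α) * neg 1), 1, neg 1, neg 1 * neg 1} : Set α),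
      x * y ∈ ({neg ((neg 1 : α) * neg 1), 1, neg 1, neg 1 * neg 1} : Set α) ∧
      x ⊓ y ∈ ({neg ((neg 1 : α) * neg 1), 1, neg 1, neg 1 * neg 1} : Set α) ∧
      x ⊔ y ∈ ({neg ((neg 1 : α) * neg 1), 1, neg 1, neg 1 * neg 1} : Set α)) ∧
    (∀ x ∈ ({neg ((neg 1 : α) * neg 1), 1, neg 1, neg 1 * neg 1} : Set α),
      neg x ∈ ({neg ((neg 1 : α) * neg 1), 1, neg 1, neg 1 * neg 1} : Set α)) := by
  have hchain := isChain_insert_insert_pair (neg_neg_one_mul_self_le_one sq) hef.le (sq (neg 1))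
  refine ⟨neg_neg_one_mul_self_lt_one sq hef, hef, neg_one_lt_mul_self sq hef,
    fun x hx y hy => ⟨?_, hchain.inf_mem hx hy, hchain.sup_mem hx hy⟩, fun x hx => ?_⟩
  · simp only [Set.mem_insert_iff, Set.mem_singleton_iff] at hx hy ⊢
    rcases hx with rfl | rfl | rfl | rfl <;> rcases hy with rfl | rfl | rfl | rfl <;>
      simp [mul_comm _ (neg (neg 1 * neg 1 : α)), mul_comm (neg 1 * neg 1 : α) (neg 1),
        neg_neg_one_mul_self_mul_self sq, neg_neg_one_mul_self_mul_neg_one sq hef.le,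
        neg_neg_one_mul_self_mul_neg_one_mul_self sq hef.le, neg_one_mul_neg_one_mul_self sq,
        neg_one_mul_self_mul_self sq]
  · simp only [Set.mem_insert_iff, Set.mem_singleton_iff] at hx ⊢
    rcases hx with rfl | rfl | rfl | rfl <;> simp [IRL.neg_neg]
end

section
/- In any relevant algebra A, for all a, b ∈ A: |(|a| ∧ |b|)| ≤ |a| ∧ |b|, where |x| := x → x and x → y := ¬(x·¬y). -/
/-- A relevant algebra: a commutative semigroup with a distributive lattice order
and an involution satisfying the relevant-algebra postulates. -/
class RelAlg (α : Type*) extends DistribLattice α, CommSemigroup α where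
  neg : α → α
  neg_neg : ∀ a : α, neg (neg a) = a
  sq : ∀ a : α, a ≤ a * a
  anti : ∀ a b : α, a ≤ b ↔ neg b ≤ neg a
  res : ∀ a b c : α, a * b ≤ c ↔ a * neg c ≤ neg b
  elim : ∀ a b c : α, a ≤ a * (neg (b * neg b) ⊓ neg (c * neg c))

namespace RelAlg

variable {α : Type*} [RelAlg α]

/-- `x → y := ¬(x · ¬y)`. -/
def arr (x y : α) : α := neg (x * neg y)

/-- `|x| := x → x`. -/
def mod (x : α) : α := arr x x

end RelAlg

open RelAlg in
theorem stmt18 {α : Type*} [RelAlg α] (a b : α) :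
    mod (mod a ⊓ mod b) ≤ mod a ⊓ mod b := by
  set c : α := mod a ⊓ mod b with hc
  show neg (c * neg c) ≤ c
  rw [anti, RelAlg.neg_neg, mul_comm]
  calc neg c ≤ neg c * (neg (a * neg a) ⊓ neg (b * neg b)) := elim _ a b
    _ = neg c * c := by rw [hc]; rfl
end

section
/- Let A be a relevant algebra and a, b ∈ A. Define DFg(a) = {c ∈ A : a ∧ |d| ≤ c for some d ∈ A}, where |x| := x → x := ¬(x·¬x). Then DFg(a) is the smallest deductive filter containing a, and DFg(a) ∩ DFg(b) = DFg(a ∨ b). -/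
namespace RelAlg

variable {α : Type*} [RelAlg α]

/-- Key lemma: for any `d₁ d₂` there is `d` with `|d| ≤ |d₁| ⊓ |d₂|`. -/
lemma mod_le_inf (d₁ d₂ : α) : ∃ d : α, mod d ≤ mod d₁ ⊓ mod d₂ := by
  set e : α := mod d₁ ⊓ mod d₂ with he
  refine ⟨neg e, ?_⟩
  have h1 : neg e ≤ neg e * e := by
    have := elim (neg e) d₁ d₂
    simpa [he, mod, arr] using this
  have h2 : neg (neg e * e) ≤ neg (neg e) := (anti (neg e) (neg e * e)).mp h1
  rw [neg_neg] at h2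
  simpa [mod, arr, neg_neg] using h2

end RelAlg

open RelAlg in
/-- `DFg a = {c : a ⊓ |d| ≤ c for some d}` is the smallest deductive filter
containing `a`, and `DFg a ∩ DFg b = DFg (a ⊔ b)`. A deductive filter is a
lattice filter containing all `|d|`. -/
theorem stmt19 {α : Type*} [RelAlg α] (a b : α)
    (DFg : α → Set α) (hDFg : ∀ x : α, DFg x = {c : α | ∃ d : α, x ⊓ mod d ≤ c})
    (IsDF : Set α → Prop)
    (hIsDF : ∀ F : Set α, IsDF F ↔
      ((∀ x ∈ F, ∀ y : α, x ≤ y → y ∈ F) ∧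
       (∀ x ∈ F, ∀ y ∈ F, x ⊓ y ∈ F) ∧
       (∀ d : α, mod d ∈ F))) :
    (a ∈ DFg a ∧ IsDF (DFg a) ∧ ∀ F : Set α, IsDF F → a ∈ F → DFg a ⊆ F) ∧
    DFg a ∩ DFg b = DFg (a ⊔ b) := by
  simp only [hDFg, hIsDF]
  constructor
  · refine ⟨⟨a, inf_le_left⟩, ⟨?_, ?_, ?_⟩, ?_⟩
    · rintro x ⟨d, hd⟩ y hxy
      exact ⟨d, hd.trans hxy⟩
    · rintro x ⟨d₁, h₁⟩ y ⟨d₂, h₂⟩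
      obtain ⟨d, hd⟩ := mod_le_inf d₁ d₂
      refine ⟨d, le_inf ?_ ?_⟩
      · exact le_trans (inf_le_inf_left a (hd.trans inf_le_left)) h₁
      · exact le_trans (inf_le_inf_left a (hd.trans inf_le_right)) h₂
    · intro d
      exact ⟨d, inf_le_right⟩
    · rintro F hF haF c ⟨d, hd⟩
      obtain ⟨hup, hmeet, hmod⟩ := hF
      exact hup _ (hmeet a haF _ (hmod d)) c hd
  · ext c
    simp only [Set.mem_inter_iff, Set.mem_setOf_eq]
    constructor
    · rintro ⟨⟨d₁, h₁⟩, ⟨d₂, h₂⟩⟩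
      obtain ⟨d, hd⟩ := mod_le_inf d₁ d₂
      refine ⟨d, ?_⟩
      calc (a ⊔ b) ⊓ mod d ≤ (a ⊔ b) ⊓ (mod d₁ ⊓ mod d₂) := inf_le_inf_left _ hd
        _ = (a ⊓ (mod d₁ ⊓ mod d₂)) ⊔ (b ⊓ (mod d₁ ⊓ mod d₂)) := inf_sup_right a b _
        _ ≤ c ⊔ c := sup_le_sup
             (le_trans (inf_le_inf_left a inf_le_left) h₁)
             (le_trans (inf_le_inf_left b inf_le_right) h₂)
        _ = c := sup_idem c
    · rintro ⟨d, hd⟩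
      exact ⟨⟨d, le_trans (inf_le_inf_right _ le_sup_left) hd⟩,
             ⟨d, le_trans (inf_le_inf_right _ le_sup_right) hd⟩⟩
end
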